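/- arXiv:1307.5413 — 8 statements merged into one kernel-verified Lean document; each statement's English description precedes it below -/
import Mathlib

section
/- If G is a finite Cayley integral group, then every subgroup H of G is also a Cayley integral group. -/
open scoped Classical

/-- The adjacency matrix of the undirected Cayley graph `Cay(G,S)`:
the `(a,b)` entry is `1` if `a * b⁻¹ ∈ S` and `0` otherwise. -/
noncomputable def cayleyAdjMatrix {G : Type*} [Group G] [Fintype G] (S : Set G) :
    Matrix G G ℝ :=
  Matrix.of fun a b => if a * b⁻¹ ∈ S then (1 : ℝ) else 0

/-- A finite group `G` is *Cayley integral* if for every subset `S ⊆ G` with `1 ∉ S` and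
`S = S⁻¹`, every eigenvalue of the adjacency matrix of the Cayley graph `Cay(G,S)`
is an integer. -/
def IsCayleyIntegral (G : Type*) [Group G] [Fintype G] : Prop :=
  ∀ S : Set G, (1 : G) ∉ S → (∀ s ∈ S, s⁻¹ ∈ S) →
    ∀ μ ∈ spectrum ℝ (cayleyAdjMatrix S), ∃ k : ℤ, μ = (k : ℝ)

lemma mem_spectrum_iff_eig {n : Type*} [Fintype n] [DecidableEq n] (M : Matrix n n ℝ) (μ : ℝ) :
    μ ∈ spectrum ℝ M ↔ ∃ v, v ≠ 0 ∧ M.mulVec v = μ • v := by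
  rw [spectrum.mem_iff, Matrix.isUnit_iff_isUnit_det, isUnit_iff_ne_zero, not_not,
    ← Matrix.exists_mulVec_eq_zero_iff]
  have halg : ∀ v : n → ℝ, (algebraMap ℝ (Matrix n n ℝ) μ).mulVec v = μ • v := by
    intro v
    rw [Algebra.algebraMap_eq_smul_one, Matrix.smul_mulVec, Matrix.one_mulVec]
  constructor
  · rintro ⟨v, hv, h⟩
    refine ⟨v, hv, ?_⟩
    rw [Matrix.sub_mulVec, halg, sub_eq_zero] at h
    exact h.symm
  · rintro ⟨v, hv, h⟩
    refine ⟨v, hv, ?_⟩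
    rw [Matrix.sub_mulVec, halg, h, sub_self]

lemma sum_eq_sum_subgroup {G : Type*} [Group G] [Fintype G] (H : Subgroup G)
    (f : G → ℝ) (hf : ∀ b, b ∉ H → f b = 0) :
    ∑ b : G, f b = ∑ b : H, f ↑b := by
  rw [show (∑ b : H, f ↑b) = ∑ b : (H : Set G), f ↑b from rfl, Finset.sum_set_coe]
  refine (Finset.sum_subset (Finset.subset_univ _) ?_).symm
  intro x _ hx
  exact hf x (by simpa using hx)

/-- Every subgroup of a finite Cayley integral group is Cayley integral. -/
theorem subgroup_cayley_integral (G : Type*) [Group G] [Fintype G]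
    (hG : IsCayleyIntegral G) (H : Subgroup G) : IsCayleyIntegral H := by
  intro S h1 hinv μ hμ
  set S' : Set G := ((↑) : H → G) '' S with hS'
  have hS'H : ∀ {x : G}, x ∈ S' → x ∈ H := by
    rintro x ⟨s, _, rfl⟩; exact s.2
  have h1' : (1 : G) ∉ S' := by
    rintro ⟨s, hs, hs1⟩
    exact h1 (by rwa [show s = 1 from Subtype.ext hs1] at hs)
  have hinv' : ∀ s ∈ S', s⁻¹ ∈ S' := by
    rintro _ ⟨s, hs, rfl⟩
    exact ⟨s⁻¹, hinv s hs, rfl⟩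
  obtain ⟨v, hv, hev⟩ := (@mem_spectrum_iff_eig _ _ (fun a b => Classical.propDecidable _) (cayleyAdjMatrix S) μ).mp hμ
  set w : G → ℝ := fun g => if hg : g ∈ H then v ⟨g, hg⟩ else 0 with hwdef
  have hwH : ∀ (b : H), w ↑b = v b := by
    intro b; simp [hwdef, b.2]
  have hw0 : w ≠ 0 := by
    intro h0
    apply hv
    funext b
    have := congrFun h0 (b : G)
    rw [hwH] at this
    simpa using this
  have key : (cayleyAdjMatrix S').mulVec w = μ • w := by
    funext g
    show ∑ b : G, cayleyAdjMatrix S' g b * w b = μ • w g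
    by_cases hg : g ∈ H
    · have hsum : ∑ b : G, cayleyAdjMatrix S' g b * w b
          = ∑ b : H, cayleyAdjMatrix S' g ↑b * w ↑b := by
        refine sum_eq_sum_subgroup H _ ?_
        intro b hb
        simp [hwdef, hb]
      rw [hsum]
      have hcond : ∀ b : H, (g * (↑b)⁻¹ ∈ S') ↔ ((⟨g, hg⟩ : H) * b⁻¹ ∈ S) := by
        intro b
        constructor
        · rintro ⟨s, hs, hseq⟩
          have : s = (⟨g, hg⟩ : H) * b⁻¹ := by
            ext; simpa using hseq
          rwa [← this]
        · intro hs
          exact ⟨(⟨g, hg⟩ : H) * b⁻¹, hs, rfl⟩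
      have heq : ∀ b : H, cayleyAdjMatrix S' g ↑b * w ↑b
          = cayleyAdjMatrix S ⟨g, hg⟩ b * v b := by
        intro b
        rw [hwH]
        congr 1
        simp only [cayleyAdjMatrix, Matrix.of_apply]
        rw [if_congr (hcond b) rfl rfl]
      rw [Finset.sum_congr rfl fun b _ => heq b]
      have := congrFun hev ⟨g, hg⟩
      simp only [Matrix.mulVec, dotProduct] at this
      rw [this]
      simp [hwdef, hg]
    · have : ∀ b : G, cayleyAdjMatrix S' g b * w b = 0 := by
        intro b
        by_cases hb : b ∈ H
        · have hns : g * b⁻¹ ∉ S' := by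
            intro hmem
            exact hg (by simpa using H.mul_mem (hS'H hmem) hb)
          simp [cayleyAdjMatrix, hns]
        · simp [hwdef, hb]
      rw [Finset.sum_congr rfl fun b _ => this b]
      simp [hwdef, hg]
  exact hG S' h1' hinv' μ ((@mem_spectrum_iff_eig _ _ (fun a b => Classical.propDecidable _) (cayleyAdjMatrix S') μ).mpr ⟨w, hw0, key⟩)
end

section
/- Let G be a finite group and let S ⊆ G be a subset with 1 ∉ S, S = S⁻¹, and S closed under conjugation (g⁻¹sg ∈ S for all s ∈ S, g ∈ G). Then for every complex irreducible character χ of G, the complex number θ_χ = (1/χ(1))·∑_{s ∈ S} χ(s) is an eigenvalue of the adjacency matrix of the Cayley graph Cay(G,S) (viewed as a complex matrix). -/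
/-!
Since `S` is a union of conjugacy classes, `T = ∑_{s ∈ S} ρ(s)` commutes with every `ρ(g)`, so
by Schur's lemma `T = c • id` on an irreducible `V`; taking the trace of `T ρ(a)` gives
`∑_{s ∈ S} χ(s a) = c χ(a)`, and `a = 1` identifies `c` with `θ_χ`. As `S = S⁻¹`, the left-hand
side is the `a`-entry of `A χ`, so the character `χ` itself is an eigenvector for `θ_χ`.
-/

open scoped Classical

open CategoryTheory

theorem commute_map_sum_of_conj_mem {G R : Type*} [Group G] [Semiring R] (f : G →* R)
    (S : Finset G) (hS : ∀ s ∈ S, ∀ g : G, g⁻¹ * s * g ∈ S) (g : G) :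
    Commute (f g) (∑ s ∈ S, f s) := by
  have hsum : ∑ s ∈ S, f (g * s * g⁻¹) = ∑ s ∈ S, f s :=
    Finset.sum_equiv (MulAut.conj g).toEquiv
      (fun s => ⟨fun hs => by simpa using hS s hs g⁻¹,
        fun hs => by simpa [mul_assoc] using hS _ hs g⟩)
      (fun _ _ => rfl)
  have hg' : f g⁻¹ * f g = 1 := by rw [← map_mul, inv_mul_cancel, map_one]
  calc f g * ∑ s ∈ S, f s = (∑ s ∈ S, f (g * s * g⁻¹)) * f g := by
        simp only [map_mul, Finset.mul_sum, Finset.sum_mul, mul_assoc, hg', mul_one]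
    _ = (∑ s ∈ S, f s) * f g := by rw [hsum]

namespace FDRep

variable {k G : Type*} [Field k] [Monoid G]

theorem nontrivial_of_simple (V : FDRep k G) [Simple V] : Nontrivial V := by
  by_contra h
  rw [not_nontrivial_iff_subsingleton] at h
  exact id_nonzero V <| Action.Hom.ext <| FGModuleCat.hom_ext <|
    LinearMap.ext fun _ => Subsingleton.elim _ _

theorem character_one_ne_zero [CharZero k] (V : FDRep k G) [Simple V] : V.character 1 ≠ 0 := by
  have := V.nontrivial_of_simple
  rw [char_one]
  exact_mod_cast Module.finrank_pos.ne'

theorem exists_eq_smul_id_of_commute [IsAlgClosed k] (V : FDRep k G) [Simple V] (f : V →ₗ[k] V)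
    (hf : ∀ g, Commute (V.ρ g) f) : ∃ c : k, f = c • LinearMap.id := by
  let T : V ⟶ V := ⟨FGModuleCat.ofHom f, fun g => FGModuleCat.hom_ext (hf g).symm⟩
  obtain ⟨c, hc⟩ := endomorphism_simple_eq_smul_id k T
  refine ⟨c, ?_⟩
  have h := congrArg Action.Hom.hom hc
  rw [Action.smul_hom] at h
  exact congrArg (fun φ => φ.hom.hom) h.symm

theorem sum_character_mul_of_sum_eq_smul (V : FDRep k G) (S : Finset G) (c : k)
    (hc : ∑ s ∈ S, V.ρ s = c • LinearMap.id) (a : G) :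
    ∑ s ∈ S, V.character (s * a) = c * V.character a := by
  simp only [character, map_mul, ← map_sum, ← Finset.sum_mul, hc, smul_mul_assoc, map_smul,
    smul_eq_mul]
  rfl

end FDRep

theorem cayley_mulVec_apply {G R : Type*} [Group G] [Fintype G] [Semiring R] (S : Set G)
    (hinv : ∀ s ∈ S, s⁻¹ ∈ S) (v : G → R) (a : G) :
    (Matrix.of fun a b : G => if a * b⁻¹ ∈ S then (1 : R) else 0).mulVec v a =
      ∑ s ∈ S.toFinset, v (s * a) := by
  have hmem : ∀ s, s⁻¹ ∈ S ↔ s ∈ S := fun s => ⟨fun h => by simpa using hinv _ h, hinv s⟩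
  rw [Matrix.mulVec, dotProduct, ← Equiv.sum_comp (Equiv.mulRight a)]
  simp [hmem, Finset.sum_ite, Set.filter_mem_univ_eq_toFinset]

theorem character_eigenvalue_of_cayley_general (G : Type) [Group G] [Fintype G]
    (S : Set G) (hinv : ∀ s ∈ S, s⁻¹ ∈ S)
    (hconj : ∀ s ∈ S, ∀ g : G, g⁻¹ * s * g ∈ S)
    (V : FDRep ℂ G) (hV : CategoryTheory.Simple V) :
    ∃ v : G → ℂ, v ≠ 0 ∧
      (Matrix.of fun a b : G => if a * b⁻¹ ∈ S then (1 : ℂ) else 0).mulVec v =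
        ((V.character 1)⁻¹ * ∑ s ∈ S.toFinset, V.character s) • v := by
  obtain ⟨c, hc⟩ := V.exists_eq_smul_id_of_commute (∑ s ∈ S.toFinset, V.ρ s)
    (commute_map_sum_of_conj_mem V.ρ S.toFinset (by simpa using hconj))
  have hχ : ∀ a, ∑ s ∈ S.toFinset, V.character (s * a) = c * V.character a :=
    V.sum_character_mul_of_sum_eq_smul S.toFinset c hc
  have hθ : (V.character 1)⁻¹ * ∑ s ∈ S.toFinset, V.character s = c := by
    rw [inv_mul_eq_iff_eq_mul₀ V.character_one_ne_zero, mul_comm]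
    simpa using hχ 1
  refine ⟨V.character, fun h => V.character_one_ne_zero (congrFun h 1), ?_⟩
  funext a
  rw [cayley_mulVec_apply S hinv, hχ, hθ]
  rfl

/-- If `S` is an inverse-closed, conjugation-invariant subset of `G \ {1}`, then for every
irreducible complex character `χ` of `G`, the number `(1/χ(1)) ∑_{s ∈ S} χ(s)` is an
eigenvalue of the (complex) adjacency matrix of `Cay(G,S)`. -/
theorem character_eigenvalue_of_cayley (G : Type) [Group G] [Fintype G]
    (S : Set G) (h1 : (1 : G) ∉ S) (hinv : ∀ s ∈ S, s⁻¹ ∈ S)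
    (hconj : ∀ s ∈ S, ∀ g : G, g⁻¹ * s * g ∈ S)
    (V : FDRep ℂ G) (hV : CategoryTheory.Simple V) :
    ∃ v : G → ℂ, v ≠ 0 ∧
      (Matrix.of fun a b : G => if a * b⁻¹ ∈ S then (1 : ℂ) else 0).mulVec v =
        ((V.character 1)⁻¹ * ∑ s ∈ S.toFinset, V.character s) • v :=
  character_eigenvalue_of_cayley_general G S hinv hconj V hV
end

section
/- Let G be a finite group and let S ⊆ G with 1 ∉ S be a member of the Boolean algebra generated by the normal subgroups of G, i.e., S belongs to the smallest family of subsets of G that contains the underlying set of every normal subgroup of G and is closed under complements and finite intersections (and hence finite unions). Then the Cayley graph Cay(G,S) is integral. -/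
open scoped Classical

/-- The Boolean algebra of subsets of `G` generated by the (underlying sets of) normal
subgroups of `G`: the smallest family containing every normal subgroup and closed
under complements and finite intersections. -/
inductive InNormalBooleanAlgebra (G : Type*) [Group G] : Set G → Prop
  | normal (H : Subgroup G) (hH : H.Normal) : InNormalBooleanAlgebra G (H : Set G)
  | compl {s : Set G} : InNormalBooleanAlgebra G s → InNormalBooleanAlgebra G sᶜ
  | inter {s t : Set G} : InNormalBooleanAlgebra G s → InNormalBooleanAlgebra G t →
      InNormalBooleanAlgebra G (s ∩ t)

section Aux

variable {G : Type*} [Group G] [Fintype G]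

/-- Abbreviation for the adjacency-type matrix of a subgroup (diagonal included). -/
noncomputable def NMat (H : Subgroup G) : Matrix G G ℝ :=
  cayleyAdjMatrix (H : Set G)

lemma NMat_apply (H : Subgroup G) (a b : G) :
    NMat H a b = if a * b⁻¹ ∈ H then (1 : ℝ) else 0 := rfl

lemma mem_comm_iff {H : Subgroup G} (hH : H.Normal) {a b : G} :
    a * b ∈ H ↔ b * a ∈ H := ⟨hH.mem_comm, hH.mem_comm⟩

/-- Adjacency matrices of normal subgroups commute. -/
lemma NMat_mul_comm {H K : Subgroup G} (hH : H.Normal) (hK : K.Normal) :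
    NMat H * NMat K = NMat K * NMat H := by
  ext a b
  simp only [Matrix.mul_apply, NMat_apply]
  refine Fintype.sum_equiv
    (((Equiv.inv G).trans (Equiv.mulLeft a)).trans (Equiv.mulRight b))
    (fun c => (if a * c⁻¹ ∈ H then (1 : ℝ) else 0) * (if c * b⁻¹ ∈ K then 1 else 0))
    (fun c => (if a * c⁻¹ ∈ K then (1 : ℝ) else 0) * (if c * b⁻¹ ∈ H then 1 else 0))
    (fun c => ?_)
  have e1 : a * (a * c⁻¹ * b)⁻¹ ∈ K ↔ c * b⁻¹ ∈ K := by
    have h1 : a * (a * c⁻¹ * b)⁻¹ = (a * b⁻¹ * c) * a⁻¹ := by group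
    rw [h1, mem_comm_iff hK]
    have h2 : a⁻¹ * (a * b⁻¹ * c) = b⁻¹ * c := by group
    rw [h2, mem_comm_iff hK]
  have e2 : a * c⁻¹ * b * b⁻¹ = a * c⁻¹ := by group
  simp only [Equiv.trans_apply, Equiv.inv_apply, Equiv.coe_mulLeft, Equiv.coe_mulRight, e2]
  rw [if_congr e1.symm rfl rfl, mul_comm]

/-- The square of the adjacency matrix of a subgroup. -/
lemma NMat_sq (H : Subgroup G) :
    NMat H * NMat H =
      (((Finset.univ.filter (fun g : G => g ∈ H)).card : ℝ)) • NMat H := by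
  ext a b
  simp only [Matrix.mul_apply, NMat_apply, Matrix.smul_apply, smul_eq_mul]
  by_cases hab : a * b⁻¹ ∈ H
  · rw [if_pos hab, mul_one]
    have hterm : ∀ c : G,
        (if a * c⁻¹ ∈ H then (1 : ℝ) else 0) * (if c * b⁻¹ ∈ H then 1 else 0)
          = (if a * c⁻¹ ∈ H then (1 : ℝ) else 0) := by
      intro c
      by_cases hc : a * c⁻¹ ∈ H
      · have : c * b⁻¹ ∈ H := by
          have := H.mul_mem (H.inv_mem hc) hab
          have he : (a * c⁻¹)⁻¹ * (a * b⁻¹) = c * b⁻¹ := by group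
          rwa [he] at this
        simp [hc, this]
      · simp [hc]
    rw [Finset.sum_congr rfl (fun c _ => hterm c)]
    have := Fintype.sum_equiv ((Equiv.inv G).trans (Equiv.mulLeft a))
      (fun c : G => if a * c⁻¹ ∈ H then (1 : ℝ) else 0)
      (fun c : G => if c ∈ H then (1 : ℝ) else 0) ?_
    · rw [this, Finset.sum_boole]
    · intro c
      simp [Equiv.trans_apply]
  · rw [if_neg hab, mul_zero]
    refine Finset.sum_eq_zero fun c _ => ?_
    by_cases h1 : a * c⁻¹ ∈ H
    · have h2 : c * b⁻¹ ∉ H := by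
        intro h2
        exact hab (by
          have := H.mul_mem h1 h2
          have he : (a * c⁻¹) * (c * b⁻¹) = a * b⁻¹ := by group
          rwa [he] at this)
      simp [h2]
    · simp [h1]

lemma cayley_compl (s : Set G) :
    cayleyAdjMatrix sᶜ = NMat (⊤ : Subgroup G) - cayleyAdjMatrix s := by
  ext a b
  simp only [cayleyAdjMatrix, NMat, Matrix.sub_apply, Matrix.of_apply, Set.mem_compl_iff]
  by_cases h : a * b⁻¹ ∈ s <;> simp [h]

lemma cayley_inter (s t : Set G) :
    cayleyAdjMatrix (s ∩ t) = (cayleyAdjMatrix s).hadamard (cayleyAdjMatrix t) := by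
  ext a b
  simp only [cayleyAdjMatrix, Matrix.hadamard, Matrix.of_apply, Set.mem_inter_iff]
  by_cases h1 : a * b⁻¹ ∈ s <;> by_cases h2 : a * b⁻¹ ∈ t <;> simp [h1, h2]

lemma NMat_hadamard (H K : Subgroup G) :
    (NMat H).hadamard (NMat K) = NMat (H ⊓ K) := by
  ext a b
  simp only [NMat, cayleyAdjMatrix, Matrix.hadamard, Matrix.of_apply, SetLike.mem_coe,
    Subgroup.mem_inf]
  by_cases h1 : a * b⁻¹ ∈ H <;> by_cases h2 : a * b⁻¹ ∈ K <;> simp [h1, h2]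

/-- The generating set: adjacency matrices of normal subgroups. -/
def genSet (G : Type*) [Group G] [Fintype G] : Set (Matrix G G ℝ) :=
  {M | ∃ H : Subgroup G, H.Normal ∧ M = NMat H}

lemma hadamard_mem_span {A B : Matrix G G ℝ}
    (hA : A ∈ Submodule.span ℤ (genSet G)) (hB : B ∈ Submodule.span ℤ (genSet G)) :
    A.hadamard B ∈ Submodule.span ℤ (genSet G) := by
  induction hA using Submodule.span_induction with
  | mem x hx =>
    induction hB using Submodule.span_induction with
    | mem y hy =>
      obtain ⟨H, hH, rfl⟩ := hx
      obtain ⟨K, hK, rfl⟩ := hy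
      rw [NMat_hadamard]
      exact Submodule.subset_span ⟨H ⊓ K, inferInstance, rfl⟩
    | zero => rw [Matrix.hadamard_zero]; exact Submodule.zero_mem _
    | add y z _ _ hy hz => rw [Matrix.hadamard_add]; exact Submodule.add_mem _ hy hz
    | smul a y _ hy => rw [Matrix.hadamard_smul]; exact Submodule.smul_mem _ _ hy
  | zero => rw [Matrix.zero_hadamard]; exact Submodule.zero_mem _
  | add y z _ _ hy hz => rw [Matrix.add_hadamard]; exact Submodule.add_mem _ hy hz
  | smul a y _ hy => rw [Matrix.smul_hadamard]; exact Submodule.smul_mem _ _ hy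

lemma cayley_mem_span {S : Set G} (hS : InNormalBooleanAlgebra G S) :
    cayleyAdjMatrix S ∈ Submodule.span ℤ (genSet G) := by
  induction hS with
  | normal H hH => exact Submodule.subset_span ⟨H, hH, rfl⟩
  | compl h ih =>
    rw [cayley_compl]
    exact Submodule.sub_mem _ (Submodule.subset_span ⟨⊤, inferInstance, rfl⟩) ih
  | inter hs ht ihs iht =>
    rw [cayley_inter]
    exact hadamard_mem_span ihs iht

lemma sum_mulVec {ι : Type*} (t : Finset ι) (M : ι → Matrix G G ℝ) (v : G → ℝ) :
    (∑ i ∈ t, M i).mulVec v = ∑ i ∈ t, (M i).mulVec v := by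
  induction t using Finset.cons_induction with
  | empty => simp [Matrix.mulVec]
  | cons i s his ih => rw [Finset.sum_cons, Finset.sum_cons, Matrix.add_mulVec, ih]

lemma exists_eigenvector {A : Matrix G G ℝ} {μ : ℝ} (h : μ ∈ spectrum ℝ A) :
    ∃ v : G → ℝ, v ≠ 0 ∧ A.mulVec v = μ • v := by
  rw [spectrum.mem_iff, Matrix.isUnit_iff_isUnit_det, isUnit_iff_ne_zero, not_not] at h
  obtain ⟨v, hv, hv2⟩ := Matrix.exists_mulVec_eq_zero_iff.mpr h
  refine ⟨v, hv, ?_⟩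
  rw [Matrix.sub_mulVec, Algebra.algebraMap_eq_smul_one, Matrix.smul_mulVec,
    Matrix.one_mulVec, sub_eq_zero] at hv2
  exact hv2.symm

/-- Common eigenvector extraction: given an eigenvector of `A` (commuting with the
relevant `NMat`s), we can find one which is additionally an eigenvector, with integer
eigenvalue, of each `NMat (Hs i)`. -/
lemma common_eigenvector {ι : Type*} (A : Matrix G G ℝ) (μ : ℝ) (t : Finset ι)
    (Hs : ι → Subgroup G) (hnorm : ∀ i ∈ t, (Hs i).Normal)
    (hA : ∀ i ∈ t, A * NMat (Hs i) = NMat (Hs i) * A) :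
    ∀ v : G → ℝ, v ≠ 0 → A.mulVec v = μ • v →
      ∃ w : G → ℝ, w ≠ 0 ∧ A.mulVec w = μ • w ∧
        ∀ i ∈ t, ∃ k : ℤ, (NMat (Hs i)).mulVec w = (k : ℝ) • w := by
  induction t using Finset.cons_induction with
  | empty => intro v hv hAv; exact ⟨v, hv, hAv, by simp⟩
  | cons i s his ih =>
    intro v hv hAv
    obtain ⟨w, hw, hAw, hks⟩ :=
      ih (fun j hj => hnorm j (Finset.mem_cons_of_mem hj))
        (fun j hj => hA j (Finset.mem_cons_of_mem hj)) v hv hAv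
    set B := NMat (Hs i) with hB
    by_cases hBw : B.mulVec w = 0
    · refine ⟨w, hw, hAw, fun j hj => ?_⟩
      rcases Finset.mem_cons.mp hj with rfl | hj
      · exact ⟨0, by simp [← hB, hBw]⟩
      · exact hks j hj
    · refine ⟨B.mulVec w, hBw, ?_, fun j hj => ?_⟩
      · rw [Matrix.mulVec_mulVec, hA i (Finset.mem_cons_self i s), ← Matrix.mulVec_mulVec,
          hAw, Matrix.mulVec_smul]
      · rcases Finset.mem_cons.mp hj with rfl | hj
        · refine ⟨((Finset.univ.filter (fun g : G => g ∈ Hs j)).card : ℤ), ?_⟩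
          rw [Matrix.mulVec_mulVec, ← hB, NMat_sq, Matrix.smul_mulVec]
          push_cast
          rfl
        · obtain ⟨k, hk⟩ := hks j hj
          refine ⟨k, ?_⟩
          rw [Matrix.mulVec_mulVec,
            NMat_mul_comm (hnorm j (Finset.mem_cons_of_mem hj))
              (hnorm i (Finset.mem_cons_self i s)),
            ← Matrix.mulVec_mulVec, hk, Matrix.mulVec_smul]

end Aux

/-- If `S` (with `1 ∉ S`) belongs to the Boolean algebra generated by the normal
subgroups of a finite group `G`, then `Cay(G,S)` is integral. -/
theorem cayley_integral_of_normal_boolean_algebra (G : Type*) [Group G] [Fintype G]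
    (S : Set G) (hS : InNormalBooleanAlgebra G S) (h1 : (1 : G) ∉ S) :
    ∀ μ ∈ spectrum ℝ (cayleyAdjMatrix S), ∃ k : ℤ, μ = (k : ℝ) := by
  intro μ hμ
  obtain ⟨n, f, g, hrep⟩ := Submodule.mem_span_set'.mp (cayley_mem_span hS)
  -- choose normal subgroups for the generators
  have hgen : ∀ i : Fin n, ∃ H : Subgroup G, H.Normal ∧ (g i : Matrix G G ℝ) = NMat H :=
    fun i => (g i).2
  choose Hs hHsnorm hHseq using hgen
  have hA : cayleyAdjMatrix S = ∑ i : Fin n, (f i : ℝ) • NMat (Hs i) := by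
    rw [← hrep]
    refine Finset.sum_congr rfl fun i _ => ?_
    rw [hHseq i, Int.cast_smul_eq_zsmul]
  -- `cayleyAdjMatrix S` commutes with each `NMat (Hs i)`
  have hcomm : ∀ i : Fin n,
      cayleyAdjMatrix S * NMat (Hs i) = NMat (Hs i) * cayleyAdjMatrix S := by
    intro i
    rw [hA, Finset.sum_mul, Finset.mul_sum]
    refine Finset.sum_congr rfl fun j _ => ?_
    rw [Matrix.smul_mul, Matrix.mul_smul, NMat_mul_comm (hHsnorm j) (hHsnorm i)]
  obtain ⟨v, hv, hAv⟩ := exists_eigenvector hμ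
  obtain ⟨w, hw, hAw, hks⟩ :=
    common_eigenvector (cayleyAdjMatrix S) μ Finset.univ Hs (fun i _ => hHsnorm i)
      (fun i _ => hcomm i) v hv hAv
  choose k hk using fun i : Fin n => hks i (Finset.mem_univ i)
  refine ⟨∑ i : Fin n, f i * k i, ?_⟩
  have hKw : (cayleyAdjMatrix S).mulVec w = ((∑ i : Fin n, f i * k i : ℤ) : ℝ) • w := by
    rw [hA, sum_mulVec]
    have : ∀ i : Fin n, ((f i : ℝ) • NMat (Hs i)).mulVec w = ((f i * k i : ℤ) : ℝ) • w := by
      intro i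
      rw [Matrix.smul_mulVec, hk i, smul_smul]
      push_cast
      ring_nf
    rw [Finset.sum_congr rfl fun i _ => this i, ← Finset.sum_smul]
    push_cast
    rfl
  rw [hAw] at hKw
  obtain ⟨x, hx⟩ := Function.ne_iff.mp hw
  have := congrFun hKw x
  simp only [Pi.smul_apply, smul_eq_mul] at this
  have hx' : w x ≠ 0 := by simpa using hx
  exact mul_right_cancel₀ hx' this
end

section
/- If G is a finite Cayley integral group, then the order of every non-identity element of G belongs to the set {2, 3, 4, 6}. -/
open scoped Classical

/-!
For `g` of order `n ≥ 3`, the function `g ^ k ↦ cos (2πk/n)` (zero off `⟨g⟩`) is an eigenvector of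
`Cay(G, {g, g⁻¹})` with eigenvalue `2 cos (2π/n)`, since `cos (a - b) + cos (a + b) = 2 cos b cos a`.
If this eigenvalue is an integer, Niven's theorem pins `2/n` down to `1/3`, `1/2` or `2/3`.
-/

open scoped Matrix

theorem Matrix.mem_spectrum_of_mulVec_eq_smul {n R : Type*} [Fintype n] [DecidableEq n]
    [Field R] {A : Matrix n n R} {μ : R} {v : n → R} (hv : v ≠ 0) (h : A *ᵥ v = μ • v) :
    μ ∈ spectrum R A := by
  rw [← Matrix.spectrum_toLin']
  exact Module.End.HasEigenvalue.mem_spectrum <| Module.End.hasEigenvalue_of_hasEigenvector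
    ⟨Module.End.mem_eigenspace_iff.mpr (by rwa [Matrix.toLin'_apply]), hv⟩

theorem cayleyAdjMatrix_mulVec_apply {G : Type*} [Group G] [Fintype G] (S : Finset G)
    (v : G → ℝ) (x : G) : (cayleyAdjMatrix (S : Set G) *ᵥ v) x = ∑ s ∈ S, v (s⁻¹ * x) := by
  rw [Matrix.mulVec, dotProduct, ← Fintype.sum_ite_mem,
    ← (Equiv.inv G |>.trans (Equiv.mulRight x)).sum_comp]
  simp [cayleyAdjMatrix]

section ZPowersLift

variable {G M : Type*} [Group G] [Semiring M]

/-- Well defined on `zpowers g` only when `f` has period `orderOf g`, see `zpowersLift_zpow`. -/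
noncomputable def zpowersLift (g : G) (f : ℤ → M) (x : G) : M :=
  if h : x ∈ Subgroup.zpowers g then f (Subgroup.mem_zpowers_iff.mp h).choose else 0

theorem zpowersLift_zpow {g : G} {f : ℤ → M} (hf : Function.Periodic f (orderOf g : ℤ))
    (k : ℤ) : zpowersLift g f (g ^ k) = f k := by
  have hk : g ^ k ∈ Subgroup.zpowers g := Subgroup.zpow_mem_zpowers g k
  obtain ⟨m, hm⟩ := (zpow_eq_zpow_iff_modEq.mp (Subgroup.mem_zpowers_iff.mp hk).choose_spec).dvd
  rw [zpowersLift, dif_pos hk, ← hf.sub_int_mul_eq (x := k) m]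
  congr 1
  rw [Int.cast_id]
  linarith

theorem zpowersLift_of_notMem {g : G} {f : ℤ → M} {x : G} (hx : x ∉ Subgroup.zpowers g) :
    zpowersLift g f x = 0 :=
  dif_neg hx

theorem zpowersLift_inv_mul_add_zpowersLift_mul {g : G} {f : ℤ → M}
    (hf : Function.Periodic f (orderOf g : ℤ)) {μ : M}
    (hrec : ∀ k, f (k - 1) + f (k + 1) = μ * f k) (x : G) :
    zpowersLift g f (g⁻¹ * x) + zpowersLift g f (g * x) = μ * zpowersLift g f x := by
  by_cases hx : x ∈ Subgroup.zpowers g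
  · obtain ⟨k, rfl⟩ := Subgroup.mem_zpowers_iff.mp hx
    rw [← zpow_neg_one, ← zpow_add, ← zpow_one_add, zpowersLift_zpow hf, zpowersLift_zpow hf,
      zpowersLift_zpow hf, ← hrec, neg_add_eq_sub, add_comm 1]
  · have hg := Subgroup.mem_zpowers g
    rw [zpowersLift_of_notMem hx, zpowersLift_of_notMem, zpowersLift_of_notMem, add_zero, mul_zero]
    · rwa [Subgroup.mul_mem_cancel_left _ hg]
    · rwa [Subgroup.mul_mem_cancel_left _ (inv_mem hg)]

end ZPowersLift

open Real

theorem periodic_cos_two_pi_mul_div {n : ℕ} (hn : n ≠ 0) :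
    Function.Periodic (fun k : ℤ => cos (2 * π * k / n)) (n : ℤ) := fun k => by
  have : 2 * π * ((k + n : ℤ) : ℝ) / n = 2 * π * k / n + 2 * π := by
    push_cast
    field_simp
  simp only [this, cos_add_two_pi]

theorem two_mul_cos_mem_spectrum_cayleyAdjMatrix {G : Type*} [Group G] [Fintype G] {g : G}
    (hg : 2 < orderOf g) :
    2 * cos (2 * π / orderOf g) ∈ spectrum ℝ (cayleyAdjMatrix ({g, g⁻¹} : Set G)) := by
  set n := orderOf g
  have hg_ne : g ≠ g⁻¹ := fun h => by
    have : n ∣ 2 := orderOf_dvd_of_pow_eq_one (by rw [sq]; nth_rw 2 [h]; exact mul_inv_cancel g)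
    have := Nat.le_of_dvd two_pos this
    omega
  have hf := periodic_cos_two_pi_mul_div (n := n) (by omega)
  have hv : zpowersLift g (fun k : ℤ => cos (2 * π * k / n)) ≠ 0 := fun h => by
    have hone := zpowersLift_zpow hf 0
    rw [zpow_zero, congrFun h 1] at hone
    simp at hone
  refine Matrix.mem_spectrum_of_mulVec_eq_smul hv (funext fun x => ?_)
  rw [show ({g, g⁻¹} : Set G) = ↑({g, g⁻¹} : Finset G) by simp, cayleyAdjMatrix_mulVec_apply,
    Finset.sum_pair hg_ne, inv_inv, Pi.smul_apply, smul_eq_mul]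
  refine zpowersLift_inv_mul_add_zpowersLift_mul hf (fun k => ?_) x
  have hcos_sum : ∀ a b : ℝ, cos (a - b) + cos (a + b) = 2 * cos b * cos a := fun a b => by
    rw [cos_sub, cos_add]; ring
  push_cast
  rw [← hcos_sum, mul_sub, mul_add, sub_div, add_div, mul_one]

theorem mem_of_two_mul_cos_two_pi_div_eq_int {n : ℕ} (hn : 2 ≤ n) {k : ℤ}
    (h : 2 * cos (2 * π / n) = k) : n ∈ ({2, 3, 4, 6} : Set ℕ) := by
  have hn' : (0 : ℚ) < n := by exact_mod_cast (by omega : 0 < n)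
  have hcos : ∃ q : ℚ, cos (((2 / n : ℚ) : ℝ) * π) = q :=
    ⟨k / 2, by push_cast; rw [div_mul_eq_mul_div]; linarith⟩
  have hr : (2 / n : ℚ) ∈ Set.Icc 0 1 :=
    ⟨by positivity, (div_le_one hn').mpr (by exact_mod_cast hn)⟩
  have hniven := niven_angle_div_pi_eq hcos hr
  simp only [Set.mem_insert_iff, Set.mem_singleton_iff] at hniven ⊢
  rcases hniven with h | h | h | h | h <;> field_simp at h <;> norm_cast at h <;> omega

/-- In a finite Cayley integral group, every non-identity element has order 2, 3, 4 or 6. -/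
theorem orders_of_cayley_integral (G : Type*) [Group G] [Fintype G]
    (hG : IsCayleyIntegral G) (g : G) (hg : g ≠ 1) :
    orderOf g ∈ ({2, 3, 4, 6} : Set ℕ) := by
  have hg_two : 2 ≤ orderOf g := by
    have := orderOf_pos g
    have := mt orderOf_eq_one_iff.mp hg
    omega
  obtain hg_eq | hg_lt := hg_two.eq_or_lt
  · exact Or.inl hg_eq.symm
  have hS_one : (1 : G) ∉ ({g, g⁻¹} : Set G) := by simp [eq_comm, hg]
  have hS_inv : ∀ s ∈ ({g, g⁻¹} : Set G), s⁻¹ ∈ ({g, g⁻¹} : Set G) := by simp [or_comm]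
  obtain ⟨k, hk⟩ := hG _ hS_one hS_inv _ (two_mul_cos_mem_spectrum_cayleyAdjMatrix hg_lt)
  exact mem_of_two_mul_cos_two_pi_div_eq_int hg_two hk
end

section
/- The direct product S₃ × C₃ of the symmetric group of degree 3 with the cyclic group of order 3 is not a Cayley integral group. -/
open scoped Classical

/- Auxiliary setup: an explicit connection set in `S₃ × C₃` whose Cayley graph has
eigenvalue `√3`, together with an explicit eigenvector over `ℤ√3`. -/

abbrev GrAux := Equiv.Perm (Fin 3) × Multiplicative (ZMod 3)

def zzAux (n : ZMod 3) : Multiplicative (ZMod 3) := Multiplicative.ofAdd n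

def sfinAux : Finset GrAux :=
  {(Equiv.swap 0 2, zzAux 0), (Equiv.swap 1 2, zzAux 1), (Equiv.swap 1 2, zzAux 2)}

def ccAux : Equiv.Perm (Fin 3) := finRotate 3

def wAux : GrAux → ℤ√3 := fun g =>
  if g = (1, zzAux 0) then ⟨-2,0⟩ else if g = (1, zzAux 1) then ⟨-1,0⟩
  else if g = (1, zzAux 2) then ⟨-1,0⟩
  else if g = (Equiv.swap 1 2, zzAux 1) then ⟨0,-1⟩
  else if g = (Equiv.swap 1 2, zzAux 2) then ⟨0,-1⟩
  else if g = (Equiv.swap 0 1, zzAux 1) then ⟨0,1⟩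
  else if g = (Equiv.swap 0 1, zzAux 2) then ⟨0,1⟩
  else if g = (ccAux, zzAux 1) then ⟨1,0⟩ else if g = (ccAux, zzAux 2) then ⟨1,0⟩
  else if g = (ccAux*ccAux, zzAux 0) then ⟨2,0⟩ else 0

def NNAux : Matrix GrAux GrAux (ℤ√3) :=
  Matrix.of fun a b => if a * b⁻¹ ∈ sfinAux then 1 else 0

lemma key_aux : NNAux.mulVec wAux = fun g => (⟨0,1⟩ : ℤ√3) * wAux g := by decide

noncomputable def phiAux : ℤ√3 →+* ℝ := Zsqrtd.toReal (by norm_num)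

lemma phiAux_apply (a : ℤ√3) : phiAux a = a.re + a.im * Real.sqrt 3 := by
  simp [phiAux, Zsqrtd.toReal]

lemma phiAux_sqrt : phiAux ⟨0,1⟩ = Real.sqrt 3 := by simp [phiAux_apply]

lemma entry_aux (a b : GrAux) :
    cayleyAdjMatrix (↑sfinAux : Set GrAux) a b = phiAux (NNAux a b) := by
  by_cases h : a * b⁻¹ ∈ sfinAux <;> simp [cayleyAdjMatrix, NNAux, h]

set_option maxRecDepth 10000 in
lemma one_notmem_aux : (1 : GrAux) ∉ sfinAux := by decide

set_option maxRecDepth 10000 in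
lemma symm_aux : ∀ s ∈ sfinAux, s⁻¹ ∈ sfinAux := by decide

set_option maxHeartbeats 2000000 in
/-- `S₃ × C₃` is not Cayley integral. -/
theorem s3_times_c3_not_cayley_integral :
    ¬ IsCayleyIntegral (Equiv.Perm (Fin 3) × Multiplicative (ZMod 3)) := by
  intro H
  letI : DecidableEq GrAux := fun a b => Classical.propDecidable _
  set vR : GrAux → ℝ := fun g => phiAux (wAux g) with hvR
  -- the eigenvector is nonzero
  have hv1 : wAux (ccAux, zzAux 1) = 1 := by decide
  have hvne : vR ≠ 0 := by
    intro h
    have := congrFun h (ccAux, zzAux 1)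
    rw [hvR] at this
    simp only [hv1, map_one, Pi.zero_apply] at this
    exact one_ne_zero this
  -- `M.mulVec vR = √3 • vR`
  have hMv : (cayleyAdjMatrix (↑sfinAux : Set GrAux)).mulVec vR = Real.sqrt 3 • vR := by
    funext g
    have : (cayleyAdjMatrix (↑sfinAux : Set GrAux)).mulVec vR g
        = phiAux ((NNAux.mulVec wAux) g) := by
      simp only [Matrix.mulVec, dotProduct, map_sum, map_mul, hvR]
      exact Finset.sum_congr rfl fun b _ => by rw [entry_aux]
    rw [this, key_aux]
    simp only [map_mul, phiAux_sqrt, Pi.smul_apply, smul_eq_mul, hvR]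
  -- hence `√3 • 1 - M` kills `vR`
  have hker : (Real.sqrt 3 • (1 : Matrix GrAux GrAux ℝ)
      - cayleyAdjMatrix (↑sfinAux : Set GrAux)).mulVec vR = 0 := by
    rw [Matrix.sub_mulVec, Matrix.smul_mulVec, Matrix.one_mulVec, hMv]
    simp
  -- so `√3` is in the spectrum
  have hspec : Real.sqrt 3 ∈ spectrum ℝ (cayleyAdjMatrix (↑sfinAux : Set GrAux)) := by
    rw [spectrum.mem_iff]
    intro hU
    rw [Algebra.algebraMap_eq_smul_one] at hU
    have h0 := hU.unit.inv_mul
    rw [hU.unit_spec] at h0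
    have h1 := congrArg
      (fun B : Matrix GrAux GrAux ℝ => B.mulVec vR) h0
    simp only [Matrix.one_mulVec] at h1
    rw [← Matrix.mulVec_mulVec, hker, Matrix.mulVec_zero] at h1
    exact hvne h1.symm
  -- apply the Cayley-integrality hypothesis
  have h1 : (1 : GrAux) ∉ (↑sfinAux : Set GrAux) := by
    rw [Finset.mem_coe]; exact one_notmem_aux
  have hsymm : ∀ s ∈ (↑sfinAux : Set GrAux), s⁻¹ ∈ (↑sfinAux : Set GrAux) := by
    intro s hs
    rw [Finset.mem_coe] at *
    exact symm_aux s hs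
  obtain ⟨k, hk⟩ := H (↑sfinAux) h1 hsymm (Real.sqrt 3) hspec
  -- but `√3` is irrational
  have hirr : Irrational (Real.sqrt 3) := by
    have := (Nat.prime_three).irrational_sqrt
    simpa using this
  exact hirr.ne_int k hk
end

section
/- The special linear group SL(2,3) of 2×2 matrices of determinant 1 over the field with 3 elements is not a Cayley integral group. -/
open scoped Classical

/-!
Take `S = {x, x⁻¹, y, y⁻¹}` with `x = !![0, 1; 2, 1]` and `y = !![0, 1; 2, 2]`. The adjacency
matrix `A` of `Cay(SL(2,3), S)` acts on functions by `(A v) a = ∑ s ∈ S, v (s * a)`, and an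
explicit integer-valued function `w ≠ 0` satisfies `A (A w) = 6 w`. Since
`A ^ 2 - 6 = (A - √6) (A + √6)`, one of `±√6` is an eigenvalue of `A`, and neither is an integer.
-/

open Matrix
open scoped MatrixGroups

theorem spectrum.mem_or_neg_mem_of_sq_mem {R A : Type*} [CommRing R] [Ring A] [Algebra R A]
    {a : A} {r : R} (h : r ^ 2 ∈ spectrum R (a ^ 2)) : r ∈ spectrum R a ∨ -r ∈ spectrum R a := by
  rw [spectrum.mem_iff] at h
  by_contra! hr
  rw [spectrum.notMem_iff, spectrum.notMem_iff] at hr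
  have hfactor : algebraMap R A (r ^ 2) - a ^ 2 =
      -((algebraMap R A r - a) * (algebraMap R A (-r) - a)) := by
    rw [map_pow, map_neg]
    simp only [sub_mul, mul_sub, mul_neg, Algebra.commutes r a, sq]
    abel
  exact h (hfactor ▸ (hr.1.mul hr.2).neg)

theorem Matrix.mem_spectrum_of_mulVec_eq {n R : Type*} [Fintype n] [DecidableEq n] [CommRing R]
    {A : Matrix n n R} {μ : R} {v : n → R} (hv : v ≠ 0) (h : A *ᵥ v = μ • v) :
    μ ∈ spectrum R A := by
  rw [← Matrix.spectrum_toLin']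
  exact (Module.End.hasEigenvalue_of_hasEigenvector
    ⟨Module.End.mem_eigenspace_iff.mpr h, hv⟩).mem_spectrum

theorem cayleyAdjMatrix_mulVec {G : Type*} [Group G] [Fintype G] {S : Finset G}
    (hS : ∀ s ∈ S, s⁻¹ ∈ S) (v : G → ℝ) :
    cayleyAdjMatrix (S : Set G) *ᵥ v = fun a => ∑ s ∈ S, v (s * a) := by
  funext a
  have hmem (s : G) : a * (s * a)⁻¹ ∈ (S : Set G) ↔ s ∈ S := by
    simpa using ⟨fun h => by simpa using hS _ h, hS s⟩
  simp only [mulVec, dotProduct, cayleyAdjMatrix, of_apply, ite_mul, one_mul, zero_mul]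
  rw [← Equiv.sum_comp (Equiv.mulRight a)]
  simp only [Equiv.coe_mulRight, hmem, Finset.sum_ite_mem, Finset.univ_inter]

theorem not_isCayleyIntegral_of_mulVec_mulVec {G : Type*} [Group G] [Fintype G] {S : Set G}
    (h1 : (1 : G) ∉ S) (hS : ∀ s ∈ S, s⁻¹ ∈ S) {v : G → ℝ} (hv : v ≠ 0) {r : ℝ}
    (hr : Irrational r) (h : cayleyAdjMatrix S *ᵥ (cayleyAdjMatrix S *ᵥ v) = r ^ 2 • v) :
    ¬ IsCayleyIntegral G := by
  intro hG
  have hsq : r ^ 2 ∈ spectrum ℝ (cayleyAdjMatrix S ^ 2) :=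
    Matrix.mem_spectrum_of_mulVec_eq hv (by rwa [sq, ← mulVec_mulVec])
  rcases spectrum.mem_or_neg_mem_of_sq_mem hsq with hμ | hμ
  · obtain ⟨k, hk⟩ := hG S h1 hS _ hμ
    exact hr.ne_int k hk
  · obtain ⟨k, hk⟩ := hG S h1 hS _ hμ
    exact hr.neg.ne_int k hk

namespace SL23

def x : SL(2, ZMod 3) := ⟨!![0, 1; 2, 1], by decide⟩

def y : SL(2, ZMod 3) := ⟨!![0, 1; 2, 2], by decide⟩

def S : Finset SL(2, ZMod 3) := {x, x⁻¹, y, y⁻¹}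

/-- Found by computing the kernel of `A ^ 2 - 6`. -/
def w (g : SL(2, ZMod 3)) : ℤ := if g 0 0 = 0 then (if g 0 1 = 1 then -1 else 1) else 0

theorem one_notMem_S : (1 : SL(2, ZMod 3)) ∉ S := by decide

theorem inv_mem_S : ∀ s ∈ S, s⁻¹ ∈ S := by
  simp [S, or_comm]

theorem w_ne_zero : w ≠ 0 := by decide

theorem sum_sum_w (a : SL(2, ZMod 3)) : ∑ s ∈ S, ∑ t ∈ S, w (t * (s * a)) = 6 * w a := by
  revert a
  decide

end SL23

/-- `SL(2,3)` is not Cayley integral. -/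
theorem sl23_not_cayley_integral :
    ¬ IsCayleyIntegral (Matrix.SpecialLinearGroup (Fin 2) (ZMod 3)) := by
  set v : SL(2, ZMod 3) → ℝ := fun g => SL23.w g
  have hv : v ≠ 0 := fun h => SL23.w_ne_zero (funext fun g => by simpa [v] using congrFun h g)
  have hA : cayleyAdjMatrix (SL23.S : Set _) *ᵥ (cayleyAdjMatrix (SL23.S : Set _) *ᵥ v) =
      √6 ^ 2 • v := by
    rw [cayleyAdjMatrix_mulVec SL23.inv_mem_S, cayleyAdjMatrix_mulVec SL23.inv_mem_S,
      Real.sq_sqrt (by norm_num)]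
    funext a
    simpa [v] using congrArg (Int.cast : ℤ → ℝ) (SL23.sum_sum_w a)
  exact not_isCayleyIntegral_of_mulVec_mulVec (by exact_mod_cast SL23.one_notMem_S)
    (by exact_mod_cast SL23.inv_mem_S) hv (by norm_num) hA
end

section
/- Every non-abelian group of order 27 and exponent 3 (i.e., every non-abelian group of order 27 in which g³ = 1 for all elements g) is not a Cayley integral group. -/
open scoped Classical

/- tables -/
private def tTab : ZMod 3 → ℤ := fun k => if k = 0 then -1 else if k = 1 then 1 else 0
private def pTab : ZMod 3 × ZMod 3 × ZMod 3 → ℤ := fun w => tTab w.2.2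
private def qTab : ZMod 3 × ZMod 3 × ZMod 3 → ℤ := fun w => if w.1 = 0 then tTab w.2.2 else 0

private lemma pTab_id : ∀ i j k : ZMod 3,
    pTab (i-1,j,k) + pTab (i+1,j,k) + pTab (i,j-1,k+i) + pTab (i,j+1,k-i)
      = pTab (i,j,k) + 3 * qTab (i,j,k) := by decide

private lemma qTab_id : ∀ i j k : ZMod 3,
    qTab (i-1,j,k) + qTab (i+1,j,k) + qTab (i,j-1,k+i) + qTab (i,j+1,k-i)
      = pTab (i,j,k) + qTab (i,j,k) := by decide

private lemma comm_mem_center (G : Type*) [Group G] [Fintype G]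
    (hcard : Fintype.card G = 27)
    (hna : ¬ ∀ a b : G, a * b = b * a) (a b : G) :
    a⁻¹ * b⁻¹ * a * b ∈ Subgroup.center G := by
  haveI hp : Fact (Nat.Prime 3) := ⟨by norm_num⟩
  have hnc : Nat.card G = 27 := by simp [Nat.card_eq_fintype_card, hcard]
  have hpg : IsPGroup 3 G := IsPGroup.of_card (by rw [hnc]; norm_num : Nat.card G = 3 ^ 3)
  have hnt : Nontrivial G := by
    have : 1 < Nat.card G := by omega
    exact Finite.one_lt_card_iff_nontrivial.mp this
  have hZnt : Nontrivial (Subgroup.center G) := hpg.center_nontrivial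
  set Z := Subgroup.center G with hZ
  have hdvd : Nat.card Z ∣ 27 := hnc ▸ Subgroup.card_subgroup_dvd_card Z
  have hZpos : 1 < Nat.card Z := Finite.one_lt_card_iff_nontrivial.mpr hZnt
  have hle : Nat.card Z ≤ 27 := Nat.le_of_dvd (by norm_num) hdvd
  have hquot : Nat.card (G ⧸ Z) * Nat.card Z = 27 :=
    (Subgroup.card_eq_card_quotient_mul_card_subgroup Z ▸ hnc)
  have hcases : Nat.card Z = 3 ∨ Nat.card Z = 9 ∨ Nat.card Z = 27 := by
    interval_cases h : Nat.card Z <;> revert hdvd <;> decide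
  have hnotcyc : ¬ IsCyclic (G ⧸ Z) := by
    intro hc
    exact hna (fun x y => commutative_of_cyclic_center_quotient (QuotientGroup.mk' Z)
      (by rw [QuotientGroup.ker_mk']) x y)
  have hq9 : Nat.card (G ⧸ Z) = 9 := by
    rcases hcases with h | h | h
    · rw [h] at hquot; omega
    · exfalso; apply hnotcyc
      exact isCyclic_of_prime_card (p := 3) (by rw [h] at hquot; omega)
    · exfalso
      have : Z = ⊤ := by
        apply Subgroup.eq_top_of_card_eq
        rw [h, hnc]
      exact hna fun x y => by
        have hx : x ∈ Z := this ▸ Subgroup.mem_top x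
        exact (Subgroup.mem_center_iff.mp hx y).symm
  have hcomm : ∀ x y : G ⧸ Z, x * y = y * x :=
    IsPGroup.commutative_of_card_eq_prime_sq (p := 3) (by rw [hq9]; norm_num)
  have hmk : QuotientGroup.mk' Z (a⁻¹ * b⁻¹ * a * b) = 1 := by
    have h := hcomm (QuotientGroup.mk' Z a) (QuotientGroup.mk' Z b)
    simp only [map_mul, map_inv]
    rw [mul_assoc, mul_assoc, h]
    group
  have hker : a⁻¹ * b⁻¹ * a * b ∈ Z := by
    rw [← QuotientGroup.ker_mk' Z]
    exact hmk
  exact hker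

section Main

variable {G : Type*} [Group G] [Fintype G]

private lemma pow_mod3 (g : G) (hg : g ^ 3 = 1) (n : ℕ) : g ^ n = g ^ (n % 3) := by
  conv_lhs => rw [← Nat.div_add_mod n 3]
  rw [pow_add, pow_mul, hg, one_pow, one_mul]

private theorem order27_aux (G : Type*) [Group G] [Fintype G]
    (hcard : Fintype.card G = 27) (hexp : ∀ g : G, g ^ 3 = 1)
    (hna : ¬ ∀ a b : G, a * b = b * a) :
    ¬ IsCayleyIntegral G := by
  intro hCI
  push_neg at hna
  obtain ⟨a, b, hab⟩ := hna
  set c : G := a⁻¹ * b⁻¹ * a * b with hc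
  have hcenter : ∀ g : G, g * c = c * g :=
    fun g => Subgroup.mem_center_iff.mp
      (comm_mem_center G hcard (by push_neg; exact ⟨a, b, hab⟩) a b) g
  have hCa : Commute c a := (hcenter a).symm
  have hCb : Commute c b := (hcenter b).symm
  have hba : b * a = a * b * c⁻¹ := by rw [hc]; group
  -- powers of c⁻¹ commute with a and b
  have hc2 : c⁻¹ = c ^ 2 := by
    have h3 := hexp c
    rw [eq_comm, eq_inv_iff_mul_eq_one, ← pow_succ]
    exact h3
  -- relation: b * a^n = a^n * b * c⁻¹^n
  have hrel : ∀ n : ℕ, b * a ^ n = a ^ n * b * c⁻¹ ^ n := by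
    intro n
    induction n with
    | zero => simp
    | succ n ih =>
      have hcomm_ca : (c⁻¹ ^ n) * a = a * (c⁻¹ ^ n) := ((hCa.inv_left).pow_left n).eq
      calc b * a ^ (n+1) = (b * a ^ n) * a := by rw [pow_succ, mul_assoc]
        _ = (a ^ n * b * c⁻¹ ^ n) * a := by rw [ih]
        _ = a ^ n * b * (c⁻¹ ^ n * a) := by rw [mul_assoc]
        _ = a ^ n * b * (a * c⁻¹ ^ n) := by rw [hcomm_ca]
        _ = a ^ n * ((b * a) * c⁻¹ ^ n) := by group
        _ = a ^ n * ((a * b * c⁻¹) * c⁻¹ ^ n) := by rw [hba]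
        _ = a ^ (n+1) * b * c⁻¹ ^ (n+1) := by rw [pow_succ, pow_succ']; group
  -- the normal form map
  set e : ZMod 3 × ZMod 3 × ZMod 3 → G :=
    fun w => a ^ w.1.val * b ^ w.2.1.val * c ^ w.2.2.val with he
  have hea : ∀ w : ZMod 3 × ZMod 3 × ZMod 3,
      a * e w = e (w.1 + 1, w.2.1, w.2.2) := by
    rintro ⟨i, j, k⟩
    show a * (a ^ i.val * b ^ j.val * c ^ k.val)
        = a ^ (i+1).val * b ^ j.val * c ^ k.val
    have h1 : a ^ (i+1).val = a * a ^ i.val := by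
      rw [pow_mod3 a (hexp a) (i+1).val,
        show (i+1).val % 3 = (1 + i.val) % 3 by revert i; decide,
        ← pow_mod3 a (hexp a) (1 + i.val), pow_add, pow_one]
    rw [h1]; group
  have heb : ∀ w : ZMod 3 × ZMod 3 × ZMod 3,
      b * e w = e (w.1, w.2.1 + 1, w.2.2 - w.1) := by
    rintro ⟨i, j, k⟩
    show b * (a ^ i.val * b ^ j.val * c ^ k.val)
        = a ^ i.val * b ^ (j+1).val * c ^ (k - i).val
    have h1 : b ^ (j+1).val = b * b ^ j.val := by
      rw [pow_mod3 b (hexp b) (j+1).val,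
        show (j+1).val % 3 = (1 + j.val) % 3 by revert j; decide,
        ← pow_mod3 b (hexp b) (1 + j.val), pow_add, pow_one]
    have h2 : c ^ (k - i).val = c⁻¹ ^ i.val * c ^ k.val := by
      rw [hc2, ← pow_mul, ← pow_add,
        pow_mod3 c (hexp c) (2 * i.val + k.val),
        show ∀ k i : ZMod 3, (k - i).val = (2 * i.val + k.val) % 3 by decide]
    have h3 : (c⁻¹ ^ i.val) * b ^ j.val = b ^ j.val * (c⁻¹ ^ i.val) :=
      (((hCb.inv_left).pow_left i.val).pow_right j.val).eq
    rw [h1, h2]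
    calc b * (a ^ i.val * b ^ j.val * c ^ k.val)
        = (b * a ^ i.val) * b ^ j.val * c ^ k.val := by group
      _ = (a ^ i.val * b * c⁻¹ ^ i.val) * b ^ j.val * c ^ k.val := by rw [hrel]
      _ = a ^ i.val * b * (c⁻¹ ^ i.val * b ^ j.val) * c ^ k.val := by group
      _ = a ^ i.val * b * (b ^ j.val * c⁻¹ ^ i.val) * c ^ k.val := by rw [h3]
      _ = a ^ i.val * (b * b ^ j.val) * (c⁻¹ ^ i.val * c ^ k.val) := by group
  -- basic distinctness facts
  have hcne : c ≠ 1 := by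
    intro h
    apply hab
    calc a * b = b * a * (a⁻¹ * b⁻¹ * a * b) := by group
      _ = b * a := by rw [← hc, h, mul_one]
  have hpow4 : ∀ x : G, (x ^ 2) ^ 2 = x := by
    intro x
    have h4 : x ^ 4 = x := by
      rw [pow_mod3 x (hexp x) 4]
      norm_num
    rw [← pow_mul]
    norm_num
    exact h4
  have hsplit : ∀ x : G, x ^ 3 = 1 → ∀ u u' : ZMod 3,
      x ^ u.val = x ^ u'.val * x ^ (u - u').val := by
    intro x hx u u'
    rw [← pow_add, pow_mod3 x hx u.val, pow_mod3 x hx (u'.val + (u - u').val),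
      show u.val % 3 = (u'.val + (u - u').val) % 3 from by revert u u'; decide]
  have hdval : ∀ d : ZMod 3, d ≠ 0 → d.val = 1 ∨ d.val = 2 := by decide
  -- injectivity of e
  have hinj : Function.Injective e := by
    rintro ⟨i, j, k⟩ ⟨i', j', k'⟩ heq
    simp only [he] at heq
    have hi : i = i' := by
      by_contra hne
      have hd : i - i' ≠ 0 := sub_ne_zero.mpr hne
      have heq2 : a ^ (i - i').val * (b ^ j.val * c ^ k.val)
          = b ^ j'.val * c ^ k'.val := by
        apply mul_left_cancel (a := a ^ i'.val)
        calc a ^ i'.val * (a ^ (i - i').val * (b ^ j.val * c ^ k.val))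
            = (a ^ i'.val * a ^ (i - i').val) * b ^ j.val * c ^ k.val := by group
          _ = a ^ i.val * b ^ j.val * c ^ k.val := by rw [← hsplit a (hexp a) i i']
          _ = a ^ i'.val * b ^ j'.val * c ^ k'.val := heq
          _ = a ^ i'.val * (b ^ j'.val * c ^ k'.val) := by group
      have hx : a ^ (i - i').val
          = b ^ j'.val * c ^ k'.val * (c ^ k.val)⁻¹ * (b ^ j.val)⁻¹ := by
        rw [eq_mul_inv_iff_mul_eq, eq_mul_inv_iff_mul_eq, mul_assoc]
        exact heq2
      have hcomm : Commute (a ^ (i - i').val) b := by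
        rw [hx]
        exact Commute.mul_left (Commute.mul_left
          (Commute.mul_left ((Commute.refl b).pow_left j'.val) (hCb.pow_left k'.val))
          ((hCb.pow_left k.val).inv_left)) (((Commute.refl b).pow_left j.val).inv_left)
      rcases hdval _ hd with h1 | h2
      · rw [h1, pow_one] at hcomm
        exact hab hcomm.eq
      · rw [h2] at hcomm
        have h4 := hcomm.pow_left 2
        rw [hpow4 a] at h4
        exact hab h4.eq
    subst hi
    rw [mul_assoc, mul_assoc] at heq
    have heq3 : b ^ j.val * c ^ k.val = b ^ j'.val * c ^ k'.val := mul_left_cancel heq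
    have hj : j = j' := by
      by_contra hne
      have hd : j - j' ≠ 0 := sub_ne_zero.mpr hne
      have heq4 : b ^ (j - j').val * c ^ k.val = c ^ k'.val := by
        apply mul_left_cancel (a := b ^ j'.val)
        calc b ^ j'.val * (b ^ (j - j').val * c ^ k.val)
            = (b ^ j'.val * b ^ (j - j').val) * c ^ k.val := by group
          _ = b ^ j.val * c ^ k.val := by rw [← hsplit b (hexp b) j j']
          _ = b ^ j'.val * c ^ k'.val := heq3
      have hx : b ^ (j - j').val = c ^ k'.val * (c ^ k.val)⁻¹ := by
        rw [eq_mul_inv_iff_mul_eq]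
        exact heq4
      have hcomm : Commute (b ^ (j - j').val) a := by
        rw [hx]
        exact Commute.mul_left (hCa.pow_left k'.val) ((hCa.pow_left k.val).inv_left)
      rcases hdval _ hd with h1 | h2
      · rw [h1, pow_one] at hcomm
        exact hab hcomm.eq.symm
      · rw [h2] at hcomm
        have h4 := hcomm.pow_left 2
        rw [hpow4 b] at h4
        exact hab h4.eq.symm
    subst hj
    have heq5 : c ^ k.val = c ^ k'.val := mul_left_cancel heq3
    have hk : k = k' := by
      by_contra hne
      have hd : k - k' ≠ 0 := sub_ne_zero.mpr hne
      have heq6 : c ^ (k - k').val = 1 := by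
        apply mul_left_cancel (a := c ^ k'.val)
        rw [mul_one, ← hsplit c (hexp c) k k']
        exact heq5
      rcases hdval _ hd with h1 | h2
      · rw [h1, pow_one] at heq6
        exact hcne heq6
      · rw [h2] at heq6
        apply hcne
        calc c = (c ^ 2) ^ 2 := (hpow4 c).symm
          _ = 1 := by rw [heq6, one_pow]
    subst hk
    rfl
  have hbij : Function.Bijective e :=
    (Fintype.bijective_iff_injective_and_card e).mpr
      ⟨hinj, by simp [Fintype.card_prod, ZMod.card, hcard]⟩
  set E : (ZMod 3 × ZMod 3 × ZMod 3) ≃ G := Equiv.ofBijective e hbij with hE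
  have hEapp : ∀ w, E w = e w := fun w => rfl
  have hEa : ∀ i j k : ZMod 3, a * E (i, j, k) = E (i + 1, j, k) := by
    intro i j k
    rw [hEapp, hEapp]
    exact hea (i, j, k)
  have hEb : ∀ i j k : ZMod 3, b * E (i, j, k) = E (i, j + 1, k - i) := by
    intro i j k
    rw [hEapp, hEapp]
    exact heb (i, j, k)
  have hz1 : ∀ x : ZMod 3, x - 1 + 1 = x := by decide
  have hz2 : ∀ x y : ZMod 3, x + y - y = x := by decide
  have hEainv : ∀ i j k : ZMod 3, a⁻¹ * E (i, j, k) = E (i - 1, j, k) := by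
    intro i j k
    have h := hEa (i - 1) j k
    rw [hz1 i] at h
    rw [← h, inv_mul_cancel_left]
  have hEbinv : ∀ i j k : ZMod 3, b⁻¹ * E (i, j, k) = E (i, j - 1, k + i) := by
    intro i j k
    have h := hEb i (j - 1) (k + i)
    rw [hz1 j, hz2 k i] at h
    rw [← h, inv_mul_cancel_left]
  -- distinctness of the connection set
  have ha1 : a ≠ 1 := fun h => hab (by rw [h]; simp)
  have hb1 : b ≠ 1 := fun h => hab (by rw [h]; simp)
  have hane : a ≠ a⁻¹ := by
    intro h
    apply ha1
    have h2 : a ^ 2 = 1 := by rw [pow_two]; nth_rewrite 2 [h]; simp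
    calc a = (a ^ 2) ^ 2 := (hpow4 a).symm
      _ = 1 := by rw [h2, one_pow]
  have hbne : b ≠ b⁻¹ := by
    intro h
    apply hb1
    have h2 : b ^ 2 = 1 := by rw [pow_two]; nth_rewrite 2 [h]; simp
    calc b = (b ^ 2) ^ 2 := (hpow4 b).symm
      _ = 1 := by rw [h2, one_pow]
  have habne : a ≠ b := fun h => hab (by rw [h])
  have habinv : a ≠ b⁻¹ := by
    intro h
    apply hab
    rw [h]
    simp
  have hainvb : a⁻¹ ≠ b := by
    intro h
    apply hab
    rw [← h]
    simp
  have hainvbinv : a⁻¹ ≠ b⁻¹ := fun h => habne (inv_injective h)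
  -- the connection set
  set S : Set G := {a, a⁻¹, b, b⁻¹} with hS
  have h1S : (1 : G) ∉ S := by
    simp only [hS, Set.mem_insert_iff, Set.mem_singleton_iff]
    push_neg
    exact ⟨Ne.symm ha1, fun h => ha1 (by rw [← inv_inv a, ← h, inv_one]),
      Ne.symm hb1, fun h => hb1 (by rw [← inv_inv b, ← h, inv_one])⟩
  have hSsymm : ∀ s ∈ S, s⁻¹ ∈ S := by
    intro s hs
    simp only [hS, Set.mem_insert_iff, Set.mem_singleton_iff] at hs ⊢
    rcases hs with rfl | rfl | rfl | rfl
    · exact Or.inr (Or.inl rfl)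
    · exact Or.inl (by rw [inv_inv])
    · exact Or.inr (Or.inr (Or.inr rfl))
    · exact Or.inr (Or.inr (Or.inl (by rw [inv_inv])))
  -- the candidate eigenvector
  set v : G → ℝ :=
    fun g => (pTab (E.symm g) : ℝ) + Real.sqrt 3 * (qTab (E.symm g) : ℝ) with hv
  have hsqrt3 : Real.sqrt 3 * Real.sqrt 3 = 3 := Real.mul_self_sqrt (by norm_num)
  -- adjacency row description
  have hadj : ∀ g h : G, cayleyAdjMatrix S g h
      = if h ∈ ({a⁻¹ * g, a * g, b⁻¹ * g, b * g} : Finset G) then (1 : ℝ) else 0 := by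
    intro g h
    have hiff : g * h⁻¹ ∈ S ↔ h ∈ ({a⁻¹ * g, a * g, b⁻¹ * g, b * g} : Finset G) := by
      have hflip : ∀ s : G, g * h⁻¹ = s ↔ h = s⁻¹ * g := by
        intro s
        constructor
        · intro H; rw [← H]; group
        · intro H; rw [H]; group
      simp only [hS, Set.mem_insert_iff, Set.mem_singleton_iff, Finset.mem_insert,
        Finset.mem_singleton, hflip, inv_inv]
      try tauto
    unfold cayleyAdjMatrix
    rw [Matrix.of_apply]
    by_cases hmem : g * h⁻¹ ∈ S
    · rw [if_pos hmem, if_pos (hiff.mp hmem)]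
    · rw [if_neg hmem, if_neg (fun hx => hmem (hiff.mpr hx))]
  have hT4 : ∀ g : G, (a⁻¹ * g ≠ a * g) ∧ (a⁻¹ * g ≠ b⁻¹ * g) ∧ (a⁻¹ * g ≠ b * g)
      ∧ (a * g ≠ b⁻¹ * g) ∧ (a * g ≠ b * g) ∧ (b⁻¹ * g ≠ b * g) := by
    intro g
    refine ⟨fun h => hane (mul_right_cancel h).symm,
      fun h => hainvbinv (mul_right_cancel h),
      fun h => hainvb (mul_right_cancel h),
      fun h => habinv (mul_right_cancel h),
      fun h => habne (mul_right_cancel h),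
      fun h => hbne (mul_right_cancel h).symm⟩
  -- row sum formula
  have hrow : ∀ g : G, (cayleyAdjMatrix S).mulVec v g
      = v (a⁻¹ * g) + v (a * g) + v (b⁻¹ * g) + v (b * g) := by
    intro g
    obtain ⟨h1, h2, h3, h4, h5, h6⟩ := hT4 g
    show (∑ h : G, cayleyAdjMatrix S g h * v h) = _
    calc (∑ h : G, cayleyAdjMatrix S g h * v h)
        = ∑ h : G, (if h ∈ ({a⁻¹ * g, a * g, b⁻¹ * g, b * g} : Finset G)
            then v h else 0) := by
          apply Finset.sum_congr rfl
          intro h _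
          rw [hadj g h, ite_mul, one_mul, zero_mul]
      _ = ∑ h ∈ ({a⁻¹ * g, a * g, b⁻¹ * g, b * g} : Finset G), v h := by
          rw [Finset.sum_ite_mem, Finset.univ_inter]
      _ = v (a⁻¹ * g) + v (a * g) + v (b⁻¹ * g) + v (b * g) := by
          rw [show ({a⁻¹ * g, a * g, b⁻¹ * g, b * g} : Finset G)
            = insert (a⁻¹ * g) (insert (a * g) (insert (b⁻¹ * g) {b * g})) from rfl]
          rw [Finset.sum_insert (by simp [h1, h2, h3]),
            Finset.sum_insert (by simp [h4, h5]),
            Finset.sum_insert (by simp [h6]), Finset.sum_singleton]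
          ring
  -- the eigenvalue equation
  have hAv : (cayleyAdjMatrix S).mulVec v = (1 + Real.sqrt 3) • v := by
    funext g
    obtain ⟨⟨i, j, k⟩, rfl⟩ : ∃ w, E w = g := ⟨E.symm g, E.apply_symm_apply g⟩
    rw [hrow, Pi.smul_apply, smul_eq_mul]
    rw [hEainv i j k, hEa i j k, hEbinv i j k, hEb i j k]
    simp only [hv, Equiv.symm_apply_apply]
    have hip : ((pTab (i-1,j,k) : ℝ) + pTab (i+1,j,k) + pTab (i,j-1,k+i) + pTab (i,j+1,k-i))
        = (pTab (i,j,k) : ℝ) + 3 * qTab (i,j,k) := by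
      exact_mod_cast congrArg (fun z : ℤ => (z : ℝ)) (pTab_id i j k)
    have hiq : ((qTab (i-1,j,k) : ℝ) + qTab (i+1,j,k) + qTab (i,j-1,k+i) + qTab (i,j+1,k-i))
        = (pTab (i,j,k) : ℝ) + qTab (i,j,k) := by
      exact_mod_cast congrArg (fun z : ℤ => (z : ℝ)) (qTab_id i j k)
    linear_combination hip + Real.sqrt 3 * hiq - (qTab (i,j,k) : ℝ) * hsqrt3
  -- the eigenvector is nonzero
  have hv0 : v ≠ 0 := by
    intro h0
    have hz := congrFun h0 (E (1, 0, 0))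
    simp only [hv, Equiv.symm_apply_apply, Pi.zero_apply] at hz
    rw [show pTab (1,0,0) = -1 from rfl, show qTab (1,0,0) = 0 from rfl] at hz
    push_cast at hz
    linarith
  -- spectrum membership
  have hspec : (1 + Real.sqrt 3) ∈ spectrum ℝ (cayleyAdjMatrix S) := by
    rw [spectrum.mem_iff]
    intro hU
    obtain ⟨u, hu⟩ := hU
    have h1 : (algebraMap ℝ (Matrix G G ℝ) (1 + Real.sqrt 3) - cayleyAdjMatrix S).mulVec v
        = 0 := by
      rw [Algebra.algebraMap_eq_smul_one, Matrix.sub_mulVec, Matrix.smul_mulVec,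
        Matrix.one_mulVec, hAv, sub_self]
    apply hv0
    have h2 : ((u⁻¹ : (Matrix G G ℝ)ˣ) : Matrix G G ℝ).mulVec
        (((u : Matrix G G ℝ)).mulVec v) = v := by
      rw [Matrix.mulVec_mulVec, u.inv_mul, Matrix.one_mulVec]
    rw [hu, h1, Matrix.mulVec_zero] at h2
    exact h2.symm
  obtain ⟨kk, hkk⟩ := hCI S h1S hSsymm _ hspec
  have h3irr : Irrational (Real.sqrt 3) := by
    simpa using Nat.prime_three.irrational_sqrt
  have hfin : Irrational ((kk - 1 : ℤ) : ℝ) := by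
    have heqq : ((kk - 1 : ℤ) : ℝ) = Real.sqrt 3 := by push_cast; linarith [hkk]
    rw [heqq]
    exact h3irr
  exact Int.not_irrational _ hfin

end Main


/-- No non-abelian group of order 27 and exponent 3 is Cayley integral. -/
theorem order27_exponent3_not_cayley_integral (G : Type*) [Group G] [Fintype G]
    (hcard : Fintype.card G = 27) (hexp : ∀ g : G, g ^ 3 = 1)
    (hna : ¬ ∀ a b : G, a * b = b * a) :
    ¬ IsCayleyIntegral G :=
  order27_aux G hcard hexp hna
end

section
/- For every natural number n ≥ 0, the group Q₈ × C₂ⁿ is a Cayley integral group, where Q₈ is the quaternion group of order 8 and C₂ⁿ is the direct product of n copies of the cyclic group of order 2. -/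
open scoped Classical

/-!
Let `ε = (a 2, 1)`, the image of `-1 ∈ Q₈`. It is a central involution, every square is `1` or
`ε`, and any two involutions commute. Since `ε` is central, the adjacency operator
`A = ∑ s ∈ S, λ s` of the left regular representation `λ` preserves the `±1`-eigenspaces of `λ ε`.
On the `+1`-eigenspace every `λ s` is an involution, and any two of them commute. On the
`-1`-eigenspace the terms of `s` and `s⁻¹ = ε * s` cancel when `s * s = ε`, so only the central
involutions of `S` are left. Finally, a sum of commuting involutions has integer eigenvalues.
-/

open Finset

section Involutions

theorem ne_neg_of_ne_zero (K : Type*) {V : Type*} [Field K] [CharZero K] [AddCommGroup V]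
    [Module K V] {v : V} (hv : v ≠ 0) :
    v ≠ -v := by
  intro h
  have h2 : (2 : K) • v = 0 := by
    rw [two_smul]
    nth_rewrite 2 [h]
    exact add_neg_cancel v
  exact hv ((smul_eq_zero.mp h2).resolve_left two_ne_zero)

variable {K V : Type*} [Field K] [CharZero K] [AddCommGroup V] [Module K V]

/-- Splitting an eigenvector `v` of `T i + ∑ j ∈ s, T j` as `(v + T i v) + (v - T i v)` gives an
eigenvector of `∑ j ∈ s, T j` for the eigenvalue `μ - 1` or `μ + 1`. -/
theorem exists_int_eq_of_sum_involutions_apply_eq_smul {ι : Type*} (p : Submodule K V)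
    (T : ι → Module.End K V) {s : Finset ι}
    (hmaps : ∀ i ∈ s, ∀ x ∈ p, T i x ∈ p)
    (hinv : ∀ i ∈ s, ∀ x ∈ p, T i (T i x) = x)
    (hcomm : ∀ i ∈ s, ∀ j ∈ s, ∀ x ∈ p, T i (T j x) = T j (T i x))
    {μ : K} {v : V} (hvp : v ∈ p) (hv : v ≠ 0) (hμ : ∑ i ∈ s, T i v = μ • v) :
    ∃ k : ℤ, μ = k := by
  induction s using Finset.induction_on generalizing μ v with
  | empty =>
    rw [sum_empty, eq_comm, smul_eq_zero] at hμ
    exact ⟨0, by simpa using hμ.resolve_right hv⟩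
  | insert i s hi ih =>
    have hi_mem : i ∈ insert i s := mem_insert_self i s
    set u := T i v
    have hup : u ∈ p := hmaps i hi_mem v hvp
    have hsv : ∑ j ∈ s, T j v = μ • v - u := by
      rw [sum_insert hi] at hμ
      rw [← hμ, add_sub_cancel_left]
    have hsu : ∑ j ∈ s, T j u = μ • u - v := by
      calc ∑ j ∈ s, T j u = T i (∑ j ∈ s, T j v) := by
            rw [map_sum]
            exact sum_congr rfl fun j hj => hcomm i hi_mem j (mem_insert_of_mem hj) v hvp |>.symm
        _ = μ • u - v := by rw [hsv, map_sub, map_smul, hinv i hi_mem v hvp]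
    have ih' := @ih (fun j hj => hmaps j (mem_insert_of_mem hj))
      (fun j hj => hinv j (mem_insert_of_mem hj))
      (fun j hj j' hj' => hcomm j (mem_insert_of_mem hj) j' (mem_insert_of_mem hj'))
    by_cases hvu : v + u = 0
    · have hvu' : v - u ≠ 0 := by
        rw [eq_neg_of_add_eq_zero_right hvu, sub_neg_eq_add]
        exact fun h => ne_neg_of_ne_zero K hv (eq_neg_of_add_eq_zero_left h)
      obtain ⟨k, hk⟩ := ih' (μ := μ + 1) (p.sub_mem hvp hup) hvu' (by
        simp only [map_sub, sum_sub_distrib, hsv, hsu]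
        module)
      exact ⟨k - 1, by rw [Int.cast_sub, ← hk]; ring⟩
    · obtain ⟨k, hk⟩ := ih' (μ := μ - 1) (p.add_mem hvp hup) hvu (by
        simp only [map_add, sum_add_distrib, hsv, hsu]
        module)
      exact ⟨k + 1, by rw [Int.cast_add, ← hk]; ring⟩

end Involutions

section Group

variable {G : Type*} [Group G] {ε : G}

theorem mul_self_eq_one_of_forall_mul_self (hsq : ∀ g : G, g * g = 1 ∨ g * g = ε) :
    ε * ε = 1 := by
  rcases hsq ε with h | h
  · exact h
  · simp [mul_eq_left.mp h]

theorem inv_eq_mul_of_mul_self_eq {g : G} (hε : ε * ε = 1) (hεg : ε * g = g * ε)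
    (hg : g * g = ε) : g⁻¹ = ε * g := by
  rw [inv_eq_iff_mul_eq_one, hεg, ← mul_assoc, hg, hε]

end Group

namespace Representation

variable {K G V : Type*} [Field K] [Group G] [AddCommGroup V] [Module K V]
  (ρ : Representation K G V) {ε : G}

theorem apply_apply (g h : G) (x : V) : ρ g (ρ h x) = ρ (g * h) x := by
  rw [map_mul, Module.End.mul_apply]

theorem apply_comm_of_mem_center (hε : ε ∈ Subgroup.center G) (g : G) (x : V) :
    ρ g (ρ ε x) = ρ ε (ρ g x) := by
  rw [apply_apply, apply_apply, Subgroup.mem_center_iff.mp hε g]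

theorem apply_mul_self_of_apply_eq_self (hsq : ∀ g : G, g * g = 1 ∨ g * g = ε) {x : V}
    (hx : ρ ε x = x) (g : G) : ρ (g * g) x = x := by
  rcases hsq g with h | h <;> simp [h, hx]

/-- The terms for `s` and `s⁻¹ = ε * s` cancel. -/
theorem sum_filter_mul_self_ne_one_apply_eq_zero (hε : ε ∈ Subgroup.center G)
    (hsq : ∀ g : G, g * g = 1 ∨ g * g = ε) (hε1 : ε ≠ 1) {S : Finset G}
    (hS : ∀ s ∈ S, s⁻¹ ∈ S) {w : V} (hw : ρ ε w = -w) :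
    ∑ s ∈ S with s * s ≠ 1, ρ s w = 0 := by
  have hεε := mul_self_eq_one_of_forall_mul_self hsq
  have hcomm : ∀ g, Commute g ε := Subgroup.mem_center_iff.mp hε
  refine sum_involution (fun s _ => ε * s) (fun s _ => ?_) (fun s _ _ h => ?_) (fun s hs => ?_)
    (fun s _ => by rw [← mul_assoc, hεε, one_mul])
  · rw [← apply_apply, ← ρ.apply_comm_of_mem_center hε, hw, map_neg, add_neg_cancel]
  · exact hε1 (mul_eq_right.mp h)
  · rw [mem_filter] at hs ⊢
    have hss : s * s = ε := (hsq s).resolve_left hs.2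
    refine ⟨?_, ?_⟩
    · rw [← inv_eq_mul_of_mul_self_eq hεε (hcomm s).symm.eq hss]
      exact hS s hs.1
    · rw [(hcomm s).mul_mul_mul_comm, hεε, one_mul]
      exact hs.2

variable [CharZero K]

/-- On the vectors fixed by `ρ ε`, every `ρ s` is an involution, and these involutions commute
since `ρ (s * t)` is an involution as well. -/
theorem exists_int_eq_of_sum_apply_eq_smul_of_apply_eq_self (hε : ε ∈ Subgroup.center G)
    (hsq : ∀ g : G, g * g = 1 ∨ g * g = ε) (S : Finset G) {μ : K} {w : V} (hw : ρ ε w = w)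
    (hw0 : w ≠ 0) (hμ : ∑ s ∈ S, ρ s w = μ • w) : ∃ k : ℤ, μ = k := by
  set p := Module.End.eigenspace (ρ ε) 1
  have hp : ∀ x, x ∈ p ↔ ρ ε x = x := by simp [p]
  have hinv : ∀ g : G, ∀ x ∈ p, ρ g (ρ g x) = x := fun g x hx => by
    rw [apply_apply, ρ.apply_mul_self_of_apply_eq_self hsq ((hp x).mp hx)]
  have hmaps : ∀ g : G, ∀ x ∈ p, ρ g x ∈ p := fun g x hx => by
    rw [hp, ← ρ.apply_comm_of_mem_center hε, (hp x).mp hx]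
  refine exists_int_eq_of_sum_involutions_apply_eq_smul p ρ (s := S) (fun g _ => hmaps g)
    (fun g _ => hinv g) ?_ ((hp w).mpr hw) hw0 hμ
  intro g _ h _ x hx
  have hgh : ρ (g * h) (ρ (g * h) x) = x := hinv (g * h) x hx
  have hhg : ρ (g * h) (ρ (h * g) x) = x := by
    rw [← apply_apply ρ h g, ← apply_apply ρ g h, hinv h _ (hmaps g x hx), hinv g x hx]
  calc ρ g (ρ h x) = ρ (g * h)⁻¹ (ρ (g * h) (ρ (g * h) x)) := by
        rw [inv_self_apply, apply_apply]
    _ = ρ (g * h)⁻¹ (ρ (g * h) (ρ (h * g) x)) := by rw [hgh, hhg]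
    _ = ρ h (ρ g x) := by rw [inv_self_apply, apply_apply]

theorem exists_int_eq_of_sum_apply_eq_smul_of_apply_eq_neg (hε : ε ∈ Subgroup.center G)
    (hsq : ∀ g : G, g * g = 1 ∨ g * g = ε)
    (hinvol : ∀ g h : G, g * g = 1 → h * h = 1 → g * h = h * g) {S : Finset G}
    (hS : ∀ s ∈ S, s⁻¹ ∈ S) {μ : K} {w : V} (hw : ρ ε w = -w) (hw0 : w ≠ 0)
    (hμ : ∑ s ∈ S, ρ s w = μ • w) : ∃ k : ℤ, μ = k := by
  have hε1 : ε ≠ 1 := by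
    rintro rfl
    exact ne_neg_of_ne_zero K hw0 (by rwa [map_one, Module.End.one_apply] at hw)
  rw [← sum_filter_add_sum_filter_not S (fun s => s * s = 1),
    ρ.sum_filter_mul_self_ne_one_apply_eq_zero hε hsq hε1 hS hw, add_zero] at hμ
  refine exists_int_eq_of_sum_involutions_apply_eq_smul ⊤ ρ (fun _ _ _ _ => Submodule.mem_top)
    (fun g hg x _ => ?_) (fun g hg h hh x _ => ?_) Submodule.mem_top hw0 hμ
  · rw [apply_apply, (mem_filter.mp hg).2, map_one, Module.End.one_apply]
  · rw [apply_apply, apply_apply, hinvol g h (mem_filter.mp hg).2 (mem_filter.mp hh).2]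

theorem exists_int_eq_of_sum_apply_eq_smul (hε : ε ∈ Subgroup.center G)
    (hsq : ∀ g : G, g * g = 1 ∨ g * g = ε)
    (hinvol : ∀ g h : G, g * g = 1 → h * h = 1 → g * h = h * g) {S : Finset G}
    (hS : ∀ s ∈ S, s⁻¹ ∈ S) {μ : K} {v : V} (hv0 : v ≠ 0)
    (hμ : ∑ s ∈ S, ρ s v = μ • v) : ∃ k : ℤ, μ = k := by
  by_cases hv : v + ρ ε v = 0
  · exact ρ.exists_int_eq_of_sum_apply_eq_smul_of_apply_eq_neg hε hsq hinvol hS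
      (eq_neg_of_add_eq_zero_right hv) hv0 hμ
  refine ρ.exists_int_eq_of_sum_apply_eq_smul_of_apply_eq_self hε hsq S ?_ hv ?_
  · rw [map_add, apply_apply, mul_self_eq_one_of_forall_mul_self hsq, map_one,
      Module.End.one_apply, add_comm]
  · simp only [map_add, sum_add_distrib, hμ, ρ.apply_comm_of_mem_center hε, ← map_sum, map_smul,
      smul_add]

end Representation

noncomputable def leftRegularFun (K G : Type*) [CommSemiring K] [Group G] :
    Representation K G (G → K) where
  toFun g := LinearMap.funLeft K K (g⁻¹ * ·)
  map_one' := by ext; simp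
  map_mul' g h := by ext; simp [LinearMap.funLeft_apply, mul_assoc]

@[simp]
theorem leftRegularFun_apply {K G : Type*} [CommSemiring K] [Group G] (g : G) (f : G → K)
    (x : G) :
    leftRegularFun K G g f x = f (g⁻¹ * x) :=
  rfl

theorem toLin'_cayleyAdjMatrix {G : Type*} [Group G] [Fintype G] (S : Set G) :
    (cayleyAdjMatrix S).toLin' = ∑ s ∈ S.toFinset, leftRegularFun ℝ G s := by
  refine LinearMap.ext fun f => funext fun a => ?_
  simp only [Matrix.toLin'_apply, Matrix.mulVec, dotProduct, cayleyAdjMatrix, Matrix.of_apply,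
    ite_mul, one_mul, zero_mul, LinearMap.coe_sum, Finset.sum_apply]
  calc ∑ b, (if a * b⁻¹ ∈ S then f b else 0)
      = ∑ s, if s ∈ S then f (s⁻¹ * a) else 0 :=
        Fintype.sum_equiv ((Equiv.inv G).trans (Equiv.mulLeft a)) _ _ fun b => by simp
    _ = ∑ s ∈ S.toFinset, leftRegularFun ℝ G s f a := by
        simp [Finset.sum_ite, Set.filter_mem_univ_eq_toFinset]

theorem isCayleyIntegral_of_mul_self_eq_one_or_eq {G : Type*} [Group G] [Fintype G] (ε : G)
    (hε : ε ∈ Subgroup.center G) (hsq : ∀ g : G, g * g = 1 ∨ g * g = ε)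
    (hinvol : ∀ g h : G, g * g = 1 → h * h = 1 → g * h = h * g) : IsCayleyIntegral G := by
  intro S _ hS μ hμ
  rw [← Matrix.spectrum_toLin', ← Module.End.hasEigenvalue_iff_mem_spectrum] at hμ
  obtain ⟨v, hv⟩ := hμ.exists_hasEigenvector
  refine (leftRegularFun ℝ G).exists_int_eq_of_sum_apply_eq_smul hε hsq hinvol (S := S.toFinset)
    (by simpa using hS) hv.2 ?_
  rw [← LinearMap.sum_apply, ← toLin'_cayleyAdjMatrix]
  exact hv.apply_eq_smul

/-- For every `n ≥ 0`, the group `Q₈ × C₂ⁿ` is Cayley integral. -/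
theorem q8_times_c2n_cayley_integral (n : ℕ) :
    IsCayleyIntegral (QuaternionGroup 2 × (Fin n → Multiplicative (ZMod 2))) := by
  have hC2 : ∀ c : Fin n → Multiplicative (ZMod 2), c * c = 1 := fun c =>
    funext fun i => (by decide : ∀ y : Multiplicative (ZMod 2), y * y = 1) (c i)
  refine isCayleyIntegral_of_mul_self_eq_one_or_eq (QuaternionGroup.a 2, 1) ?_ ?_ ?_
  · rw [Subgroup.center_prod]
    have hQ : ∀ g : QuaternionGroup 2, g * .a 2 = .a 2 * g := by decide
    exact ⟨Subgroup.mem_center_iff.mpr hQ, Subgroup.one_mem _⟩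
  · intro g
    rcases (by decide : ∀ q : QuaternionGroup 2, q * q = 1 ∨ q * q = .a 2) g.1 with h | h
    · exact Or.inl (Prod.ext h (hC2 g.2))
    · exact Or.inr (Prod.ext h (hC2 g.2))
  · intro g h hg _
    have hQ : ∀ p q : QuaternionGroup 2, p * p = 1 → p * q = q * p := by decide
    exact Prod.ext (hQ g.1 h.1 (congrArg Prod.fst hg)) (mul_comm g.2 h.2)
end
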